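/- arXiv:1810.02898 — 6 statements merged into one kernel-verified Lean document; each statement's English description precedes it below -/
import Mathlib

section
/- Let ℓ ≥ 1 and let e = (e_1, …, e_ℓ) be a vector in ℝ^{n_e} partitioned into ℓ blocks, and let j* = min(argmax_j |e_j|). If |e_{j*}| < 1, then the modified TOD update satisfies |h(e)| ≤ |e| · √(1 − |e| / ℓ^{3/2}). -/
/-!
Only the block `j*` is changed, by the factor `1 - m` where `m = |e_{j*}| < 1`, so
`|h(e)|² = |e|² - m³(2 - m)`. Since `e_{j*}` is the largest of `ℓ` blocks, `|e|² ≤ ℓ m²`, hence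
`|e|³ ≤ ℓ^{3/2} m³ ≤ ℓ^{3/2} m³(2 - m)`, which is the claim after dividing by `ℓ^{3/2}`.
-/

open Finset

theorem Fintype.sum_eq_sum_sub_add_of_forall_ne {ι M : Type*} [Fintype ι] [AddCommGroup M]
    (f g : ι → M) (i : ι) (hfg : ∀ j ≠ i, g j = f j) :
    ∑ j, g j = ∑ j, f j - f i + g i := by
  classical
  have hrest : ∑ j ∈ univ.erase i, g j = ∑ j ∈ univ.erase i, f j :=
    Finset.sum_congr rfl fun j hj => hfg j (ne_of_mem_erase hj)
  rw [← add_sum_erase _ g (mem_univ i), ← add_sum_erase _ f (mem_univ i), hrest]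
  abel

lemma Real.rpow_three_halves {x : ℝ} (hx : 0 ≤ x) : x ^ (3 / 2 : ℝ) = x * √x := by
  rw [show (3 / 2 : ℝ) = 1 + 1 / 2 by norm_num, Real.rpow_add' hx (by norm_num), Real.rpow_one,
    Real.sqrt_eq_rpow]

lemma Real.mul_sqrt_le_rpow_three_halves_mul_pow {S L m : ℝ} (hL : 0 ≤ L)
    (hm : 0 ≤ m) (hSL : S ≤ L * m ^ 2) :
    S * √S ≤ L ^ (3 / 2 : ℝ) * m ^ 3 :=
  calc S * √S ≤ (L * m ^ 2) * √(L * m ^ 2) :=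
        mul_le_mul hSL (Real.sqrt_le_sqrt hSL) (Real.sqrt_nonneg _) (by positivity)
    _ = L ^ (3 / 2 : ℝ) * m ^ 3 := by
        rw [Real.sqrt_mul hL, Real.sqrt_sq hm, Real.rpow_three_halves hL]
        ring

/-- The scalar form of the bound: `S = |e|²`, `L = ℓ`, `m = |e_{j*}|`. -/
lemma sq_norm_TOD_update_le {S L m : ℝ} (hL : 0 ≤ L) (hm₀ : 0 ≤ m) (hm₁ : m ≤ 1)
    (hSL : S ≤ L * m ^ 2) :
    S - m ^ 2 + ((1 - m) * m) ^ 2 ≤ S * (1 - √S / L ^ (3 / 2 : ℝ)) := by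
  have hcube : S * √S / L ^ (3 / 2 : ℝ) ≤ m ^ 3 :=
    div_le_of_le_mul₀ (by positivity) (by positivity)
      (by rw [mul_comm (m ^ 3)]; exact Real.mul_sqrt_le_rpow_three_halves_mul_pow hL hm₀ hSL)
  have hm₄ : m ^ 4 ≤ m ^ 3 := pow_le_pow_of_le_one hm₀ hm₁ (by norm_num)
  rw [mul_sub, mul_one, ← mul_div_assoc]
  nlinarith

theorem modified_TOD_small_error_bound_general
    (ℓ : ℕ) (n : Fin ℓ → ℕ)
    (e : (j : Fin ℓ) → EuclideanSpace ℝ (Fin (n j)))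
    (jstar : Fin ℓ)
    (hmax : ∀ j, ‖e j‖ ≤ ‖e jstar‖)
    (hsmall : ‖e jstar‖ < 1)
    (h : (j : Fin ℓ) → EuclideanSpace ℝ (Fin (n j)))
    (hdef : ∀ j, h j = if j = jstar then (1 - min ‖e j‖ 1) • e j else e j) :
    Real.sqrt (∑ j, ‖h j‖ ^ 2) ≤
      Real.sqrt (∑ j, ‖e j‖ ^ 2) *
        Real.sqrt (1 - Real.sqrt (∑ j, ‖e j‖ ^ 2) / (ℓ : ℝ) ^ ((3 : ℝ) / 2)) := by
  set m := ‖e jstar‖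
  have hm₁ : m ≤ 1 := hsmall.le
  have hstep : ‖h jstar‖ = (1 - m) * m := by
    rw [hdef, if_pos rfl, norm_smul, min_eq_left hm₁, Real.norm_of_nonneg (sub_nonneg.2 hm₁)]
  have hsum : ∑ j, ‖h j‖ ^ 2 = ∑ j, ‖e j‖ ^ 2 - m ^ 2 + ((1 - m) * m) ^ 2 := by
    rw [Fintype.sum_eq_sum_sub_add_of_forall_ne (fun j => ‖e j‖ ^ 2) (fun j => ‖h j‖ ^ 2) jstar
      fun j hj => by simp only [hdef, if_neg hj], hstep]
  have hbound : ∑ j, ‖e j‖ ^ 2 ≤ ℓ * m ^ 2 := by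
    simpa using sum_le_card_nsmul univ (fun j => ‖e j‖ ^ 2) (m ^ 2)
      fun j _ => pow_le_pow_left₀ (norm_nonneg _) (hmax j) 2
  rw [hsum, ← Real.sqrt_mul (by positivity)]
  exact Real.sqrt_le_sqrt
    (sq_norm_TOD_update_le (Nat.cast_nonneg ℓ) (norm_nonneg _) hm₁ hbound)

/-- **Modified TOD, small-error bound.**
`e` is a vector in `ℝ^{n_e}` partitioned into `ℓ` blocks, and `jstar` is the
minimal index of maximal block norm.  The modified TOD update is
`h j = (1 - sat ‖e j‖) • e j` for `j = jstar` and `h j = e j` otherwise,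
where `sat s = min s 1`.  If `‖e jstar‖ < 1` then
`|h(e)| ≤ |e| · √(1 - |e| / ℓ^{3/2})`. -/
theorem modified_TOD_small_error_bound
    (ℓ : ℕ) (hℓ : 1 ≤ ℓ) (n : Fin ℓ → ℕ)
    (e : (j : Fin ℓ) → EuclideanSpace ℝ (Fin (n j)))
    (jstar : Fin ℓ)
    (hmax : ∀ j, ‖e j‖ ≤ ‖e jstar‖)
    (hmin : ∀ j, ‖e j‖ = ‖e jstar‖ → jstar ≤ j)
    (hsmall : ‖e jstar‖ < 1)
    (h : (j : Fin ℓ) → EuclideanSpace ℝ (Fin (n j)))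
    (hdef : ∀ j, h j = if j = jstar then (1 - min ‖e j‖ 1) • e j else e j) :
    Real.sqrt (∑ j, ‖h j‖ ^ 2) ≤
      Real.sqrt (∑ j, ‖e j‖ ^ 2) *
        Real.sqrt (1 - Real.sqrt (∑ j, ‖e j‖ ^ 2) / (ℓ : ℝ) ^ ((3 : ℝ) / 2)) :=
  modified_TOD_small_error_bound_general ℓ n e jstar hmax hsmall h hdef
end

section
/- Let ℓ ≥ 1 and let e ∈ ℝ^{n_e} be partitioned into ℓ blocks. Then the modified TOD update satisfies |h(e)| ≤ σ_TOD(|e|) for every e, where σ_TOD(s) = s·√(1 − s/ℓ^{3/2}) for 0 ≤ s ≤ √ℓ and σ_TOD(s) = √((ℓ−1)/ℓ)·s for s > √ℓ. In other words, the Euclidean norm W(e) = |e| is a Lyapunov function for the discrete-time system induced by the modified TOD protocol, with decay function σ_TOD. -/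
/-!
Only the largest block `e_{j*}`, of norm `m`, is changed, and it loses
`m² - ((1 - min m 1) m)² ≥ m² · min m 1` of the squared norm. Since `m ≥ |e| / √ℓ` and
`u ↦ u² · min u 1` is monotone on `[0, ∞)`, the loss is at least `u² · min u 1` with
`u = |e| / √ℓ`, and `σ_TOD(s)² = s² - u² · min u 1` on both branches of its definition.
-/

open Real Finset

namespace ModifiedTOD

/-- The decrease of the squared Lyapunov function guaranteed at `u = |e| / √ℓ`. -/
def todDecay (u : ℝ) : ℝ := u ^ 2 * min u 1

lemma monotoneOn_todDecay : MonotoneOn todDecay (Set.Ici 0) := by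
  intro u (hu : 0 ≤ u) v _ huv
  have : 0 ≤ min u 1 := le_min hu zero_le_one
  unfold todDecay
  gcongr

lemma todDecay_le_sq_sub_sq {m : ℝ} (hm : 0 ≤ m) :
    todDecay m ≤ m ^ 2 - ((1 - min m 1) * m) ^ 2 := by
  unfold todDecay
  rcases le_total m 1 with hm1 | hm1
  · rw [min_eq_left hm1]
    nlinarith [pow_nonneg hm 4]
  · rw [min_eq_right hm1]
    simp

lemma mul_sqrt_one_sub_div_rpow_eq {L s : ℝ} (hL : 0 < L) (hs : 0 ≤ s) (hsL : s ≤ √L) :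
    s * √(1 - s / L ^ ((3 : ℝ) / 2)) = √(s ^ 2 - todDecay (s / √L)) := by
  have hsqrtL : 0 < √L := sqrt_pos.2 hL
  have hrpow : L ^ ((3 : ℝ) / 2) = L * √L := by
    rw [show (3 : ℝ) / 2 = 1 + 1 / 2 by norm_num, rpow_add hL, rpow_one, sqrt_eq_rpow]
  have hu : s / √L ≤ 1 := (div_le_one hsqrtL).2 hsL
  rw [todDecay, min_eq_left hu, hrpow, ← sqrt_sq hs, ← sqrt_mul (sq_nonneg s), sqrt_sq hs]
  congr 1
  rw [div_pow, sq_sqrt hL.le]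
  field_simp

lemma sqrt_sub_one_div_mul_eq {L s : ℝ} (hL : 0 < L) (hsL : √L < s) :
    √((L - 1) / L) * s = √(s ^ 2 - todDecay (s / √L)) := by
  have hsqrtL : 0 < √L := sqrt_pos.2 hL
  have hs : 0 ≤ s := hsqrtL.le.trans hsL.le
  have hu : 1 ≤ s / √L := (one_le_div hsqrtL).2 hsL.le
  rw [todDecay, min_eq_right hu, ← sqrt_sq hs, ← sqrt_mul' _ (sq_nonneg s), sqrt_sq hs]
  congr 1
  rw [div_pow, sq_sqrt hL.le]
  field_simp

lemma sqrt_sum_sq_norm_le_sqrt_card_mul {ι : Type*} [Fintype ι] {E : ι → Type*}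
    [∀ j, SeminormedAddCommGroup (E j)] (e : ∀ j, E j) {i : ι} (hi : ∀ j, ‖e j‖ ≤ ‖e i‖) :
    √(∑ j, ‖e j‖ ^ 2) ≤ √(Fintype.card ι) * ‖e i‖ := by
  rw [← sqrt_sq (norm_nonneg (e i)), ← sqrt_mul (Nat.cast_nonneg _)]
  gcongr √?_
  calc ∑ j, ‖e j‖ ^ 2 ≤ ∑ _j : ι, ‖e i‖ ^ 2 := by gcongr with j; exact hi j
    _ = Fintype.card ι * ‖e i‖ ^ 2 := by simp

lemma sum_eq_sum_add_sub_of_ne {ι M : Type*} [Fintype ι] [AddCommGroup M] {f g : ι → M}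
    (i : ι) (hfg : ∀ j ≠ i, f j = g j) : ∑ j, f j = ∑ j, g j + (f i - g i) := by
  rw [← sub_eq_iff_eq_add', ← sum_sub_distrib]
  exact sum_eq_single i (fun j _ hj => sub_eq_zero.2 (hfg j hj)) (by simp)

end ModifiedTOD

open ModifiedTOD

theorem modified_TOD_lyapunov_decrease_general
    (ℓ : ℕ) (σ : ℝ → ℝ)
    (hσ1 : ∀ s : ℝ, 0 ≤ s → s ≤ Real.sqrt ℓ →
      σ s = s * Real.sqrt (1 - s / (ℓ : ℝ) ^ ((3 : ℝ) / 2)))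
    (hσ2 : ∀ s : ℝ, Real.sqrt ℓ < s → σ s = Real.sqrt (((ℓ : ℝ) - 1) / (ℓ : ℝ)) * s) :
    ∀ (n : Fin ℓ → ℕ) (e : (j : Fin ℓ) → EuclideanSpace ℝ (Fin (n j))) (jstar : Fin ℓ)
      (_hmax : ∀ j, ‖e j‖ ≤ ‖e jstar‖)
      (_hmin : ∀ j, ‖e j‖ = ‖e jstar‖ → jstar ≤ j)
      (h : (j : Fin ℓ) → EuclideanSpace ℝ (Fin (n j)))
      (_hdef : ∀ j, h j = if j = jstar then (1 - min ‖e j‖ 1) • e j else e j),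
      Real.sqrt (∑ j, ‖h j‖ ^ 2) ≤ σ (Real.sqrt (∑ j, ‖e j‖ ^ 2)) := by
  intro n e jstar hmax _ h hdef
  have hℓ : (0 : ℝ) < ℓ := by exact_mod_cast jstar.pos
  set m := ‖e jstar‖
  set s := √(∑ j, ‖e j‖ ^ 2)
  have hs : 0 ≤ s := sqrt_nonneg _
  have hσs : σ s = √(s ^ 2 - todDecay (s / √ℓ)) := by
    rcases le_or_gt s √ℓ with hsℓ | hsℓ
    · rw [hσ1 s hs hsℓ, mul_sqrt_one_sub_div_rpow_eq hℓ hs hsℓ]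
    · rw [hσ2 s hsℓ, sqrt_sub_one_div_mul_eq hℓ hsℓ]
  have hloss : ∑ j, ‖h j‖ ^ 2 = s ^ 2 - (m ^ 2 - ((1 - min m 1) * m) ^ 2) := by
    have hstep : 0 ≤ 1 - min m 1 := sub_nonneg.2 (min_le_right _ _)
    rw [sum_eq_sum_add_sub_of_ne jstar fun j hj => by rw [hdef j, if_neg hj],
      sq_sqrt (by positivity), hdef, if_pos rfl, norm_smul_of_nonneg hstep]
    ring
  have hum : s / √ℓ ≤ m := by
    have := sqrt_sum_sq_norm_le_sqrt_card_mul e hmax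
    rw [Fintype.card_fin] at this
    exact div_le_of_le_mul₀ (sqrt_nonneg _) (norm_nonneg _) (by linarith)
  rw [hσs, hloss]
  gcongr
  calc m ^ 2 - ((1 - min m 1) * m) ^ 2 ≥ todDecay m := todDecay_le_sq_sub_sq (norm_nonneg _)
    _ ≥ todDecay (s / √ℓ) :=
      monotoneOn_todDecay (div_nonneg hs (sqrt_nonneg _)) (norm_nonneg (e jstar)) hum

/-- **Modified TOD is a Lyapunov-decreasing protocol with gain `σ_TOD`.**
For every vector `e` partitioned into `ℓ` blocks, with `jstar` the minimal index
of maximal block norm and `h` the modified TOD update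
(`h j = (1 - min ‖e j‖ 1) • e j` for `j = jstar`, `h j = e j` otherwise),
we have `|h(e)| ≤ σ(|e|)`, where
`σ s = s·√(1 - s/ℓ^{3/2})` for `0 ≤ s ≤ √ℓ` and
`σ s = √((ℓ-1)/ℓ)·s` for `s > √ℓ`. -/
theorem modified_TOD_lyapunov_decrease
    (ℓ : ℕ) (hℓ : 1 ≤ ℓ) (σ : ℝ → ℝ)
    (hσ1 : ∀ s : ℝ, 0 ≤ s → s ≤ Real.sqrt ℓ →
      σ s = s * Real.sqrt (1 - s / (ℓ : ℝ) ^ ((3 : ℝ) / 2)))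
    (hσ2 : ∀ s : ℝ, Real.sqrt ℓ < s → σ s = Real.sqrt (((ℓ : ℝ) - 1) / (ℓ : ℝ)) * s) :
    ∀ (n : Fin ℓ → ℕ) (e : (j : Fin ℓ) → EuclideanSpace ℝ (Fin (n j))) (jstar : Fin ℓ)
      (_hmax : ∀ j, ‖e j‖ ≤ ‖e jstar‖)
      (_hmin : ∀ j, ‖e j‖ = ‖e jstar‖ → jstar ≤ j)
      (h : (j : Fin ℓ) → EuclideanSpace ℝ (Fin (n j)))
      (_hdef : ∀ j, h j = if j = jstar then (1 - min ‖e j‖ 1) • e j else e j),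
      Real.sqrt (∑ j, ‖h j‖ ^ 2) ≤ σ (Real.sqrt (∑ j, ‖e j‖ ^ 2)) :=
  modified_TOD_lyapunov_decrease_general ℓ σ hσ1 hσ2
end

section
/- Let ℓ ≥ 1 be an integer and let a, b be real numbers with 0 ≤ b ≤ a and a ≤ max{ℓ·√(2b), √ℓ·b}. Then √(a² − b²) ≤ σ_RR(a), where σ_RR(s) = s·√(1 − s²/(4ℓ⁴)) for 0 ≤ s < 2√(ℓ³) and σ_RR(s) = √((ℓ−1)/ℓ)·s for s ≥ 2√(ℓ³). -/
/-! Squaring turns the hypothesis into `a² ≤ max (2ℓ²b) (ℓb²)`. Below the threshold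
`a² < 4ℓ³` either alternative gives `a⁴ ≤ 4ℓ⁴b²`, which is the small-`a` branch of `σ_RR`;
above it, `a² ≤ 2ℓ²b` forces `b ≥ 2ℓ`, so either alternative gives `a² ≤ ℓb²`, which is
the linear branch. -/

open Real

section

variable {a b c L : ℝ}

theorem sq_le_max_of_le_max_sqrt (hL : 0 ≤ L) (hb : 0 ≤ b) (ha : 0 ≤ a)
    (h : a ≤ max (L * √(2 * b)) (√L * b)) :
    a ^ 2 ≤ max (2 * L ^ 2 * b) (L * b ^ 2) := by
  rcases le_max_iff.mp h with h | h
  · refine le_max_of_le_left ?_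
    calc a ^ 2 ≤ (L * √(2 * b)) ^ 2 := pow_le_pow_left₀ ha h 2
      _ = 2 * L ^ 2 * b := by rw [mul_pow, sq_sqrt (by positivity)]; ring
  · refine le_max_of_le_right ?_
    calc a ^ 2 ≤ (√L * b) ^ 2 := pow_le_pow_left₀ ha h 2
      _ = L * b ^ 2 := by rw [mul_pow, sq_sqrt hL]

theorem pow_four_le_of_sq_le_four_mul_cube (hL : 0 ≤ L)
    (hsmall : a ^ 2 ≤ 4 * L ^ 3) (h : a ^ 2 ≤ max (2 * L ^ 2 * b) (L * b ^ 2)) :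
    a ^ 4 ≤ 4 * L ^ 4 * b ^ 2 := by
  rcases le_max_iff.mp h with h | h
  · calc a ^ 4 = (a ^ 2) ^ 2 := by ring
      _ ≤ (2 * L ^ 2 * b) ^ 2 := pow_le_pow_left₀ (sq_nonneg a) h 2
      _ = 4 * L ^ 4 * b ^ 2 := by ring
  · calc a ^ 4 = a ^ 2 * a ^ 2 := by ring
      _ ≤ 4 * L ^ 3 * (L * b ^ 2) := mul_le_mul hsmall h (sq_nonneg a) (by positivity)
      _ = 4 * L ^ 4 * b ^ 2 := by ring

theorem sq_le_mul_sq_of_four_mul_cube_le (hL : 0 < L) (hb : 0 ≤ b)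
    (hlarge : 4 * L ^ 3 ≤ a ^ 2) (h : a ^ 2 ≤ max (2 * L ^ 2 * b) (L * b ^ 2)) :
    a ^ 2 ≤ L * b ^ 2 := by
  rcases le_max_iff.mp h with h | h
  · have hbL : 2 * L ≤ b :=
      le_of_mul_le_mul_left (by linarith) (by positivity : 0 < 2 * L ^ 2)
    calc a ^ 2 ≤ 2 * L ^ 2 * b := h
      _ = L * b * (2 * L) := by ring
      _ ≤ L * b * b := by gcongr
      _ = L * b ^ 2 := by ring
  · exact h

theorem sqrt_sq_sub_sq_le_mul_sqrt_one_sub_div (hc : 0 < c) (ha : 0 ≤ a)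
    (h : a ^ 4 ≤ c * b ^ 2) : √(a ^ 2 - b ^ 2) ≤ a * √(1 - a ^ 2 / c) := by
  have hdiv : a ^ 4 / c ≤ b ^ 2 := by rwa [div_le_iff₀ hc, mul_comm]
  calc √(a ^ 2 - b ^ 2) ≤ √(a ^ 2 * (1 - a ^ 2 / c)) := by
        gcongr
        linarith [show a ^ 2 * (1 - a ^ 2 / c) = a ^ 2 - a ^ 4 / c by ring]
    _ = a * √(1 - a ^ 2 / c) := by rw [sqrt_mul (sq_nonneg a), sqrt_sq ha]

theorem sqrt_sq_sub_sq_le_sqrt_sub_one_div_mul (hc : 0 < c) (ha : 0 ≤ a)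
    (h : a ^ 2 ≤ c * b ^ 2) : √(a ^ 2 - b ^ 2) ≤ √((c - 1) / c) * a := by
  calc √(a ^ 2 - b ^ 2) ≤ √((c - 1) / c * a ^ 2) := by
        gcongr
        rw [div_mul_eq_mul_div, le_div_iff₀ hc]
        linarith
    _ = √((c - 1) / c) * a := by rw [sqrt_mul' _ (sq_nonneg a), sqrt_sq ha]

end

/-- **Modified RR one-step decrease.**
If `0 ≤ b ≤ a` and `a ≤ max{ℓ·√(2b), √ℓ·b}`, then `√(a² - b²) ≤ σ_RR(a)`, where
`σ_RR s = s·√(1 - s²/(4ℓ⁴))` for `0 ≤ s < 2√(ℓ³)` and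
`σ_RR s = √((ℓ-1)/ℓ)·s` for `s ≥ 2√(ℓ³)`. -/
theorem modified_RR_lyapunov_decrease
    (ℓ : ℕ) (hℓ : 1 ≤ ℓ) (σ : ℝ → ℝ)
    (hσ1 : ∀ s : ℝ, 0 ≤ s → s < 2 * Real.sqrt ((ℓ : ℝ) ^ 3) →
      σ s = s * Real.sqrt (1 - s ^ 2 / (4 * (ℓ : ℝ) ^ 4)))
    (hσ2 : ∀ s : ℝ, 2 * Real.sqrt ((ℓ : ℝ) ^ 3) ≤ s →
      σ s = Real.sqrt (((ℓ : ℝ) - 1) / (ℓ : ℝ)) * s)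
    (a b : ℝ) (hb : 0 ≤ b) (hba : b ≤ a)
    (ha : a ≤ max ((ℓ : ℝ) * Real.sqrt (2 * b)) (Real.sqrt ℓ * b)) :
    Real.sqrt (a ^ 2 - b ^ 2) ≤ σ a := by
  have hℓ0 : (0 : ℝ) < ℓ := by exact_mod_cast hℓ
  have ha0 : 0 ≤ a := hb.trans hba
  have hsq := sq_le_max_of_le_max_sqrt hℓ0.le hb ha0 ha
  have hthreshold : (2 * √((ℓ : ℝ) ^ 3)) ^ 2 = 4 * (ℓ : ℝ) ^ 3 := by
    rw [mul_pow, sq_sqrt (by positivity)]; ring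
  rcases lt_or_ge a (2 * √((ℓ : ℝ) ^ 3)) with hsmall | hlarge
  · rw [hσ1 a ha0 hsmall]
    refine sqrt_sq_sub_sq_le_mul_sqrt_one_sub_div (by positivity) ha0 ?_
    refine pow_four_le_of_sq_le_four_mul_cube hℓ0.le ?_ hsq
    exact hthreshold ▸ pow_le_pow_left₀ ha0 hsmall.le 2
  · rw [hσ2 a hlarge]
    refine sqrt_sq_sub_sq_le_sqrt_sub_one_div_mul hℓ0 ha0 ?_
    refine sq_le_mul_sq_of_four_mul_cube_le hℓ0 hb ?_ hsq
    exact hthreshold ▸ pow_le_pow_left₀ (by positivity) hlarge 2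
end

section
/- Let γ > L > 0 and λ ∈ (0, 1). Set r := √((γ/L)² − 1) and 𝒯 := (1/(L·r)) · arctan( r(1−λ) / ( 2(λ/(λ+1))(γ/L − 1) + 1 + λ ) ). Let φ : [0, 𝒯] → ℝ be differentiable with φ(0) = 1/λ and φ'(τ) = −2Lφ(τ) − γ(φ(τ)² + 1) for all τ ∈ [0, 𝒯]. Then λ ≤ φ(τ) ≤ 1/λ for all τ ∈ [0, 𝒯]. -/
/-!
The Riccati equation `φ' = -2Lφ - γ(φ² + 1)` separates: with `L²r² = γ² - L²` one has
`γ(γφ² + 2Lφ + γ) = (γφ + L)² + (Lr)²`, so the phase `arctan ((γφ + L) / (Lr))` of a solution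
decreases at the constant rate `Lr`. The phase is increasing in `φ`, and by the subtraction
formula for `arctan` the phases of `1/λ` and `λ` differ by exactly `Lr · 𝒯`. Hence, starting from
`1/λ`, the phase of `φ` stays between those of `λ` and `1/λ` up to time `𝒯`.
-/

open Real Set

theorem eq_add_mul_sub_of_hasDerivWithinAt_Icc {f : ℝ → ℝ} {a b c : ℝ}
    (hf : ∀ t ∈ Icc a b, HasDerivWithinAt f c (Icc a b) t) :
    ∀ t ∈ Icc a b, f t = f a + c * (t - a) := by
  refine eq_of_has_deriv_right_eq (f' := fun _ => c) (fun t ht => ?_) (fun t _ => ?_)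
    (fun t ht => (hf t ht).continuousWithinAt) (by fun_prop) (by simp)
  · exact (hf t (Ico_subset_Icc_self ht)).mono_of_mem_nhdsWithin (Icc_mem_nhdsGE_of_mem ht)
  · simpa using (((hasDerivAt_id t).sub_const a).const_mul c).const_add (f a) |>.hasDerivWithinAt

noncomputable def riccatiPhase (L γ r x : ℝ) : ℝ := arctan ((γ * x + L) / (L * r))

theorem riccatiPhase_strictMono {L γ r : ℝ} (hγ : 0 < γ) (hLr : 0 < L * r) :
    StrictMono (riccatiPhase L γ r) :=
  arctan_strictMono.comp fun x y hxy => by gcongr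

theorem HasDerivWithinAt.riccatiPhase {φ : ℝ → ℝ} {s : Set ℝ} {t L γ r : ℝ} (hL : L ≠ 0)
    (hr : r ≠ 0) (hLr : L ^ 2 * r ^ 2 = γ ^ 2 - L ^ 2)
    (hφ : HasDerivWithinAt φ (-2 * L * φ t - γ * (φ t ^ 2 + 1)) s t) :
    HasDerivWithinAt (fun τ => _root_.riccatiPhase L γ r (φ τ)) (-(L * r)) s t := by
  unfold _root_.riccatiPhase
  convert (((hφ.const_mul γ).add_const L).div_const (L * r)).arctan using 1
  field_simp
  linear_combination -hLr

theorem riccatiPhase_inv_sub_riccatiPhase {L γ r lam : ℝ} (hL : 0 < L) (hγ : 0 < γ) (hr : 0 < r)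
    (hLr : L ^ 2 * r ^ 2 = γ ^ 2 - L ^ 2) (hlam : 0 < lam) :
    riccatiPhase L γ r (1 / lam) - riccatiPhase L γ r lam =
      arctan (r * (1 - lam) / (2 * (lam / (lam + 1)) * (γ / L - 1) + 1 + lam)) := by
  set u := (γ * (1 / lam) + L) / (L * r)
  set v := (γ * lam + L) / (L * r)
  have huv : u * -v < 1 := by
    have : 0 < u * v := by positivity
    linarith
  rw [riccatiPhase, riccatiPhase, sub_eq_add_neg, ← arctan_neg, arctan_add huv]
  congr 1
  simp only [u, v]
  field_simp
  have hden : 0 < lam * 2 * (γ - L) + L * (lam + 1) + lam * L * (lam + 1) := by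
    nlinarith [mul_pos hlam hγ, mul_pos (mul_pos hlam hlam) hL]
  rw [sub_neg_eq_add, div_eq_div_iff (by positivity) hden.ne']
  linear_combination -(1 - lam) * (lam + 1) * lam * hLr

theorem riccati_clock_bounds_gamma_gt_L_general
    (L γ lam : ℝ) (hL : 0 < L) (hγ : L < γ) (hlam0 : 0 < lam)
    (r T : ℝ)
    (hr : r = Real.sqrt ((γ / L) ^ 2 - 1))
    (hT : T = 1 / (L * r) *
      Real.arctan (r * (1 - lam) / (2 * (lam / (lam + 1)) * (γ / L - 1) + 1 + lam)))
    (φ : ℝ → ℝ) (hφ0 : φ 0 = 1 / lam)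
    (hderiv : ∀ τ ∈ Set.Icc (0 : ℝ) T,
      HasDerivWithinAt φ (-2 * L * φ τ - γ * ((φ τ) ^ 2 + 1)) (Set.Icc (0 : ℝ) T) τ) :
    ∀ τ ∈ Set.Icc (0 : ℝ) T, lam ≤ φ τ ∧ φ τ ≤ 1 / lam := by
  intro τ hτ
  have hγ0 : 0 < γ := hL.trans hγ
  have hq : 1 < (γ / L) ^ 2 := one_lt_pow₀ ((one_lt_div hL).2 hγ) two_ne_zero
  have hr0 : 0 < r := hr ▸ sqrt_pos.2 (sub_pos.2 hq)
  have hLr : L ^ 2 * r ^ 2 = γ ^ 2 - L ^ 2 := by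
    rw [hr, sq_sqrt (sub_pos.2 hq).le]
    field_simp
  have hphase : riccatiPhase L γ r (φ τ) = riccatiPhase L γ r (1 / lam) - L * r * τ := by
    rw [eq_add_mul_sub_of_hasDerivWithinAt_Icc
      (fun t ht => (hderiv t ht).riccatiPhase hL.ne' hr0.ne' hLr) τ hτ, hφ0]
    ring
  have hLrT : L * r * T = riccatiPhase L γ r (1 / lam) - riccatiPhase L γ r lam := by
    rw [hT, riccatiPhase_inv_sub_riccatiPhase hL hγ0 hr0 hLr hlam0]
    field_simp
  have hmono := riccatiPhase_strictMono hγ0 (mul_pos hL hr0)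
  have hτT : L * r * τ ≤ L * r * T := by gcongr; exact hτ.2
  have hτ0 : 0 ≤ L * r * τ := mul_nonneg (by positivity) hτ.1
  constructor
  · rw [← hmono.le_iff_le]
    linarith
  · rw [← hmono.le_iff_le]
    linarith

/-- **The Riccati clock stays in `[λ, 1/λ]` on `[0, 𝒯]`, case `γ > L`.**
With `r = √((γ/L)² - 1)` and
`𝒯 = (1/(L·r))·arctan(r(1-λ) / (2(λ/(λ+1))(γ/L - 1) + 1 + λ))`,
any solution of `φ' = -2Lφ - γ(φ² + 1)` with `φ(0) = 1/λ` satisfies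
`λ ≤ φ(τ) ≤ 1/λ` for all `τ ∈ [0, 𝒯]`. -/
theorem riccati_clock_bounds_gamma_gt_L
    (L γ lam : ℝ) (hL : 0 < L) (hγ : L < γ) (hlam0 : 0 < lam) (hlam1 : lam < 1)
    (r T : ℝ)
    (hr : r = Real.sqrt ((γ / L) ^ 2 - 1))
    (hT : T = 1 / (L * r) *
      Real.arctan (r * (1 - lam) / (2 * (lam / (lam + 1)) * (γ / L - 1) + 1 + lam)))
    (φ : ℝ → ℝ) (hφ0 : φ 0 = 1 / lam)
    (hderiv : ∀ τ ∈ Set.Icc (0 : ℝ) T,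
      HasDerivWithinAt φ (-2 * L * φ τ - γ * ((φ τ) ^ 2 + 1)) (Set.Icc (0 : ℝ) T) τ) :
    ∀ τ ∈ Set.Icc (0 : ℝ) T, lam ≤ φ τ ∧ φ τ ≤ 1 / lam :=
  riccati_clock_bounds_gamma_gt_L_general L γ lam hL hγ hlam0 r T hr hT φ hφ0 hderiv
end

section
/- Let L > 0, γ = L, and λ ∈ (0, 1). Set 𝒯 := (1/L)·(1−λ)/(1+λ). Let φ : [0, 𝒯] → ℝ be differentiable with φ(0) = 1/λ and φ'(τ) = −2Lφ(τ) − L(φ(τ)² + 1) for all τ ∈ [0, 𝒯]. Then λ ≤ φ(τ) ≤ 1/λ for all τ ∈ [0, 𝒯]. -/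
/-!
For `γ = L` the Riccati equation is `φ' = -L (φ + 1)²`, so `1 / (φ + 1)` grows linearly with
slope `L`, giving the explicit solution `φ t = (λ / (1 + λ) + L t)⁻¹ - 1`. The vector field is
`C¹`, so by uniqueness of ODE solutions `φ` is this function on `[0, 𝒯]`. It decreases from
`φ 0 = 1 / λ`, and `𝒯` is exactly the time at which it reaches `λ`.
-/

open Set

theorem eqOn_Icc_of_hasDerivWithinAt_of_contDiff {E : Type*} [NormedAddCommGroup E]
    [NormedSpace ℝ E] {v : E → E} (hv : ContDiff ℝ 1 v) {f g : ℝ → E} {a b : ℝ}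
    (hf : ∀ t ∈ Icc a b, HasDerivWithinAt f (v (f t)) (Icc a b) t)
    (hg : ∀ t ∈ Icc a b, HasDerivWithinAt g (v (g t)) (Icc a b) t)
    (ha : f a = g a) : EqOn f g (Icc a b) := by
  have hfc : ContinuousOn f (Icc a b) := fun t ht ↦ (hf t ht).continuousWithinAt
  have hgc : ContinuousOn g (Icc a b) := fun t ht ↦ (hg t ht).continuousWithinAt
  have right_deriv {h : ℝ → E} (hh : ∀ t ∈ Icc a b, HasDerivWithinAt h (v (h t)) (Icc a b) t) :
      ∀ t ∈ Ico a b, HasDerivWithinAt h (v (h t)) (Ici t) t := fun t ht ↦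
    (hh t (Ico_subset_Icc_self ht)).mono_of_mem_nhdsWithin (Icc_mem_nhdsGE_of_mem ht)
  -- Both trajectories stay in a compact set, on which `v` is Lipschitz.
  set s := f '' Icc a b ∪ g '' Icc a b
  have hs : IsCompact s :=
    (isCompact_Icc.image_of_continuousOn hfc).union (isCompact_Icc.image_of_continuousOn hgc)
  obtain ⟨K, hK⟩ := hv.locallyLipschitz.locallyLipschitzOn.exists_lipschitzOnWith_of_compact hs
  exact ODE_solution_unique_of_mem_Icc_right (s := fun _ ↦ s) (fun _ _ ↦ hK)
    hfc (right_deriv hf) (fun t ht ↦ .inl (mem_image_of_mem f (Ico_subset_Icc_self ht)))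
    hgc (right_deriv hg) (fun t ht ↦ .inr (mem_image_of_mem g (Ico_subset_Icc_self ht))) ha

/-- The solution of `φ' = -L (φ + 1)²` with `φ 0 = φ₀`. -/
noncomputable def riccatiSolution (L φ₀ t : ℝ) : ℝ := ((φ₀ + 1)⁻¹ + L * t)⁻¹ - 1

section riccatiSolution

variable {L φ₀ : ℝ}

theorem riccatiSolution_zero : riccatiSolution L φ₀ 0 = φ₀ := by
  simp [riccatiSolution]

theorem hasDerivAt_riccatiSolution {t : ℝ} (h : (φ₀ + 1)⁻¹ + L * t ≠ 0) :
    HasDerivAt (riccatiSolution L φ₀) (-L * (riccatiSolution L φ₀ t + 1) ^ 2) t := by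
  have hlin : HasDerivAt (fun t ↦ (φ₀ + 1)⁻¹ + L * t) L t := by
    simpa using ((hasDerivAt_id t).const_mul L).const_add (φ₀ + 1)⁻¹
  refine ((hlin.inv h).sub_const 1).congr_deriv ?_
  simp only [riccatiSolution, sub_add_cancel]
  field_simp

theorem riccatiSolution_antitoneOn (hL : 0 ≤ L) (h : 0 < φ₀ + 1) :
    AntitoneOn (riccatiSolution L φ₀) (Ici 0) := fun s hs t _ hst ↦ by
  have hs_pos : 0 < (φ₀ + 1)⁻¹ + L * s := by
    have : 0 ≤ L * s := mul_nonneg hL hs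
    positivity
  unfold riccatiSolution
  gcongr

theorem eqOn_riccatiSolution (hL : 0 ≤ L) (h : 0 < φ₀ + 1) {T : ℝ} {φ : ℝ → ℝ}
    (hφ : ∀ t ∈ Icc 0 T, HasDerivWithinAt φ (-L * (φ t + 1) ^ 2) (Icc 0 T) t)
    (hφ₀ : φ 0 = φ₀) : EqOn φ (riccatiSolution L φ₀) (Icc 0 T) := by
  refine eqOn_Icc_of_hasDerivWithinAt_of_contDiff (v := fun x ↦ -L * (x + 1) ^ 2)
    (by fun_prop) hφ (fun t ht ↦ ?_) (by rw [hφ₀, riccatiSolution_zero])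
  have : 0 ≤ L * t := mul_nonneg hL ht.1
  exact (hasDerivAt_riccatiSolution (by positivity)).hasDerivWithinAt

theorem riccatiSolution_one_div (hL : L ≠ 0) {lam : ℝ} (hlam : 0 < lam) :
    riccatiSolution L (1 / lam) (1 / L * ((1 - lam) / (1 + lam))) = lam := by
  have : 1 + lam ≠ 0 := by positivity
  simp only [riccatiSolution]
  field_simp
  ring

end riccatiSolution

theorem riccati_clock_bounds_gamma_eq_L_general
    (L lam : ℝ) (hL : 0 < L) (hlam0 : 0 < lam)
    (T : ℝ) (hT : T = 1 / L * ((1 - lam) / (1 + lam)))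
    (φ : ℝ → ℝ) (hφ0 : φ 0 = 1 / lam)
    (hderiv : ∀ τ ∈ Set.Icc (0 : ℝ) T,
      HasDerivWithinAt φ (-2 * L * φ τ - L * ((φ τ) ^ 2 + 1)) (Set.Icc (0 : ℝ) T) τ) :
    ∀ τ ∈ Set.Icc (0 : ℝ) T, lam ≤ φ τ ∧ φ τ ≤ 1 / lam := by
  have hφ₀ : 0 < 1 / lam + 1 := by positivity
  have hsol : EqOn φ (riccatiSolution L (1 / lam)) (Icc 0 T) := by
    refine eqOn_riccatiSolution hL.le hφ₀ (fun τ hτ ↦ ?_) hφ0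
    convert hderiv τ hτ using 1
    ring
  have hanti := riccatiSolution_antitoneOn hL.le hφ₀
  intro τ hτ
  rw [hsol hτ]
  constructor
  · calc lam = riccatiSolution L (1 / lam) T := by rw [hT, riccatiSolution_one_div hL.ne' hlam0]
      _ ≤ riccatiSolution L (1 / lam) τ := hanti hτ.1 (hτ.1.trans hτ.2) hτ.2
  · calc riccatiSolution L (1 / lam) τ ≤ riccatiSolution L (1 / lam) 0 := hanti self_mem_Ici hτ.1 hτ.1
      _ = 1 / lam := riccatiSolution_zero

/-- **The Riccati clock stays in `[λ, 1/λ]` on `[0, 𝒯]`, case `γ = L`.**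
With `𝒯 = (1/L)·(1-λ)/(1+λ)`, any solution of `φ' = -2Lφ - L(φ² + 1)` with
`φ(0) = 1/λ` satisfies `λ ≤ φ(τ) ≤ 1/λ` for all `τ ∈ [0, 𝒯]`. -/
theorem riccati_clock_bounds_gamma_eq_L
    (L lam : ℝ) (hL : 0 < L) (hlam0 : 0 < lam) (hlam1 : lam < 1)
    (T : ℝ) (hT : T = 1 / L * ((1 - lam) / (1 + lam)))
    (φ : ℝ → ℝ) (hφ0 : φ 0 = 1 / lam)
    (hderiv : ∀ τ ∈ Set.Icc (0 : ℝ) T,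
      HasDerivWithinAt φ (-2 * L * φ τ - L * ((φ τ) ^ 2 + 1)) (Set.Icc (0 : ℝ) T) τ) :
    ∀ τ ∈ Set.Icc (0 : ℝ) T, lam ≤ φ τ ∧ φ τ ≤ 1 / lam :=
  riccati_clock_bounds_gamma_eq_L_general L lam hL hlam0 T hT φ hφ0 hderiv
end

section
/- Let η > 0, γ > 0, L > 0, and let v, w, H, φ : I → ℝ be differentiable real-valued functions on an interval I ⊆ ℝ with w(t) ≥ 0, H(t) ≥ 0, and φ(t) ≥ 0 for all t ∈ I. Suppose that for all t ∈ I: v'(t) ≤ −η·v(t) − η·w(t)² − H(t)² + γ²·w(t)², w'(t) ≤ L·w(t) + H(t), and φ'(t) = −2L·φ(t) − γ(φ(t)² + 1). Then the function U(t) := v(t) + γ·φ(t)·w(t)² satisfies U'(t) ≤ −η·v(t) − η·w(t)² for all t ∈ I. -/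
/-!
Multiplying `w' ≤ L·w + H` by `2γφw ≥ 0` makes the `L`-terms of `(γφw²)'` cancel against the
`-2Lφ` of the Riccati equation, and Young's inequality `2(γφw)H ≤ γ²φ²w² + H²` absorbs the
cross term into the `-γ²φ²w²` coming from the same equation. What remains is `H² - γ²w²`,
which the dissipation inequality for `v` compensates exactly.
-/

theorem HasDerivWithinAt.add_const_mul_mul_sq {v φ w : ℝ → ℝ} {dv dφ dw c t : ℝ} {s : Set ℝ}
    (hv : HasDerivWithinAt v dv s t) (hφ : HasDerivWithinAt φ dφ s t)
    (hw : HasDerivWithinAt w dw s t) :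
    HasDerivWithinAt (fun u => v u + c * φ u * w u ^ 2)
      (dv + c * (dφ * w t ^ 2 + φ t * (2 * w t * dw))) s t := by
  have h := hv.fun_add ((hφ.fun_mul (hw.fun_pow 2)).const_mul c)
  simp only [← mul_assoc] at h
  exact h.congr_deriv (by push_cast; ring)

theorem riccati_weighted_sq_deriv_le {γ L φ w H dw : ℝ} (hγ : 0 ≤ γ) (hφ : 0 ≤ φ) (hw : 0 ≤ w)
    (hdw : dw ≤ L * w + H) :
    γ * ((-2 * L * φ - γ * (φ ^ 2 + 1)) * w ^ 2 + φ * (2 * w * dw)) ≤ H ^ 2 - γ ^ 2 * w ^ 2 := by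
  have hgrowth : 2 * γ * φ * w * dw ≤ 2 * γ * φ * w * (L * w + H) :=
    mul_le_mul_of_nonneg_left hdw (by positivity)
  have hyoung : 2 * (γ * φ * w) * H ≤ (γ * φ * w) ^ 2 + H ^ 2 := two_mul_le_add_sq _ _
  linear_combination hgrowth + hyoung

theorem hybrid_lyapunov_flow_decrease_general
    (η γ L : ℝ) (hγ : 0 < γ)
    (I : Set ℝ)
    (v w H φ dv dw : ℝ → ℝ)
    (hw0 : ∀ t ∈ I, 0 ≤ w t) (hφ0 : ∀ t ∈ I, 0 ≤ φ t)
    (hv : ∀ t ∈ I, HasDerivWithinAt v (dv t) I t)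
    (hdv : ∀ t ∈ I, dv t ≤ -η * v t - η * (w t) ^ 2 - (H t) ^ 2 + γ ^ 2 * (w t) ^ 2)
    (hw : ∀ t ∈ I, HasDerivWithinAt w (dw t) I t)
    (hdw : ∀ t ∈ I, dw t ≤ L * w t + H t)
    (hφ : ∀ t ∈ I, HasDerivWithinAt φ (-2 * L * φ t - γ * ((φ t) ^ 2 + 1)) I t) :
    ∀ t ∈ I,
      HasDerivWithinAt (fun s => v s + γ * φ s * (w s) ^ 2)
        (dv t + γ * ((-2 * L * φ t - γ * ((φ t) ^ 2 + 1)) * (w t) ^ 2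
          + φ t * (2 * w t * dw t))) I t ∧
      dv t + γ * ((-2 * L * φ t - γ * ((φ t) ^ 2 + 1)) * (w t) ^ 2
          + φ t * (2 * w t * dw t)) ≤ -η * v t - η * (w t) ^ 2 := by
  intro t ht
  refine ⟨(hv t ht).add_const_mul_mul_sq (hφ t ht) (hw t ht), ?_⟩
  have hcross := riccati_weighted_sq_deriv_le hγ.le (hφ0 t ht) (hw0 t ht) (hdw t ht)
  linarith [hdv t ht]

/-- **Flow decrease of the hybrid Lyapunov function (case `φ ≥ 0`).**
Let `v, w, H, φ` be differentiable real-valued functions on an interval `I`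
with `w, H, φ ≥ 0` on `I`, satisfying
`v' ≤ -η·v - η·w² - H² + γ²·w²`, `w' ≤ L·w + H`, and the Riccati equation
`φ' = -2L·φ - γ(φ² + 1)`.  Then `U = v + γ·φ·w²` is differentiable on `I` and
`U' ≤ -η·v - η·w²` on `I`. -/
theorem hybrid_lyapunov_flow_decrease
    (η γ L : ℝ) (hη : 0 < η) (hγ : 0 < γ) (hL : 0 < L)
    (I : Set ℝ) (hI : Set.OrdConnected I)
    (v w H φ dv dw : ℝ → ℝ)
    (hw0 : ∀ t ∈ I, 0 ≤ w t) (hH0 : ∀ t ∈ I, 0 ≤ H t) (hφ0 : ∀ t ∈ I, 0 ≤ φ t)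
    (hv : ∀ t ∈ I, HasDerivWithinAt v (dv t) I t)
    (hdv : ∀ t ∈ I, dv t ≤ -η * v t - η * (w t) ^ 2 - (H t) ^ 2 + γ ^ 2 * (w t) ^ 2)
    (hw : ∀ t ∈ I, HasDerivWithinAt w (dw t) I t)
    (hdw : ∀ t ∈ I, dw t ≤ L * w t + H t)
    (hHdiff : DifferentiableOn ℝ H I)
    (hφ : ∀ t ∈ I, HasDerivWithinAt φ (-2 * L * φ t - γ * ((φ t) ^ 2 + 1)) I t) :
    ∀ t ∈ I,
      HasDerivWithinAt (fun s => v s + γ * φ s * (w s) ^ 2)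
        (dv t + γ * ((-2 * L * φ t - γ * ((φ t) ^ 2 + 1)) * (w t) ^ 2
          + φ t * (2 * w t * dw t))) I t ∧
      dv t + γ * ((-2 * L * φ t - γ * ((φ t) ^ 2 + 1)) * (w t) ^ 2
          + φ t * (2 * w t * dw t)) ≤ -η * v t - η * (w t) ^ 2 :=
  hybrid_lyapunov_flow_decrease_general η γ L hγ I v w H φ dv dw hw0 hφ0 hv hdv hw hdw hφ
end
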